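/- On the elliptic curve $y^2 - (k^2 - 2k + 2)\,x\,y = x(x-1)(x-k^2)$ over $\mathbb{Q}(k)$, the point $(0,0)$ has exact order $2$ and the point $(k, k)$ has exact order $4$. -/

import Mathlib

noncomputable section

/-- The elliptic curve `y² - (k² - 2k + 2)xy = x(x-1)(x-k²)` over `ℚ(k)`. -/
def W9 : WeierstrassCurve.Affine (RatFunc ℚ) :=
  { a₁ := -(RatFunc.X ^ 2 - 2 * RatFunc.X + 2), a₂ := -(1 + RatFunc.X ^ 2), a₃ := 0,
    a₄ := RatFunc.X ^ 2, a₆ := 0 }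

open Classical

/-!
Since `a₃ = a₆ = 0`, the point `(0,0)` is its own negative, so it has order 2. At `(k,k)` the
tangent line has slope 1, so it is `y = x`, whose third intersection with the cubic is the
2-torsion point `(0,0)`. Thus `2(k,k) = (0,0)` and `(k,k)` has order 4.
-/

open WeierstrassCurve.Affine WeierstrassCurve.Affine.Point

theorem addOrderOf_eq_four_of_two_nsmul {G : Type*} [AddMonoid G] {P Q : G} (hQ : 2 • Q = P)
    (hP : addOrderOf P = 2) : addOrderOf Q = 4 :=
  addOrderOf_eq_prime_pow (p := 2) (n := 1)
    (by rw [pow_one, hQ]; exact fun h => by simp [AddMonoid.addOrderOf_eq_one_iff.mpr h] at hP)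
    (by rw [show 2 ^ (1 + 1) = 2 * 2 from rfl, mul_nsmul, hQ, ← hP, addOrderOf_nsmul_eq_zero])

theorem RatFunc.X_sub_C_ne_zero {K : Type*} [Field K] (c : K) :
    (RatFunc.X : RatFunc K) - RatFunc.C c ≠ 0 := by
  rw [← RatFunc.algebraMap_X, ← RatFunc.algebraMap_C, ← map_sub]
  exact RatFunc.algebraMap_ne_zero (Polynomial.X_sub_C_ne_zero c)

theorem WeierstrassCurve.Affine.Point.addOrderOf_some_zero_zero {F : Type*} [Field F]
    {W : WeierstrassCurve.Affine F} (ha₃ : W.a₃ = 0) (h : W.Nonsingular 0 0) :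
    addOrderOf (some 0 0 h) = 2 :=
  addOrderOf_eq_prime (two_nsmul (some 0 0 h) ▸ add_self_of_Y_eq (by simp [negY, ha₃]))
    (some_ne_zero h)

theorem W9_nonsingular_zero : W9.Nonsingular 0 0 :=
  nonsingular_zero.mpr ⟨rfl, Or.inr (pow_ne_zero 2 RatFunc.X_ne_zero)⟩

theorem W9_Y_ne_negY_X : RatFunc.X ≠ W9.negY RatFunc.X RatFunc.X := by
  intro h
  have h2 : (RatFunc.X : RatFunc ℚ) - 2 ≠ 0 := by
    simpa using RatFunc.X_sub_C_ne_zero (2 : ℚ)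
  apply mul_ne_zero (pow_ne_zero 2 RatFunc.X_ne_zero) h2
  simp only [W9, negY] at h
  linear_combination -h

theorem W9_nonsingular_X : W9.Nonsingular RatFunc.X RatFunc.X :=
  (nonsingular_iff ..).mpr
    ⟨(equation_iff ..).mpr (by simp only [W9]; ring), Or.inr W9_Y_ne_negY_X⟩

theorem W9_slope_X : W9.slope RatFunc.X RatFunc.X RatFunc.X RatFunc.X = 1 := by
  rw [slope_of_Y_ne rfl W9_Y_ne_negY_X, div_eq_one_iff_eq (sub_ne_zero.mpr W9_Y_ne_negY_X)]
  simp only [W9, negY]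
  ring

theorem W9_two_nsmul_some_X : 2 • some _ _ W9_nonsingular_X = some _ _ W9_nonsingular_zero := by
  rw [two_nsmul, add_self_of_Y_ne W9_Y_ne_negY_X, some.injEq, W9_slope_X]
  constructor
  · simp only [addX, W9]; ring
  · simp only [addY, negAddY, addX, negY, W9]; ring

/-- `(0,0)` has exact order 2 and `(k,k)` has exact order 4. -/
theorem stmt9 :
    ∃ h₂ : W9.Nonsingular 0 0, ∃ h₄ : W9.Nonsingular RatFunc.X RatFunc.X,
      addOrderOf (WeierstrassCurve.Affine.Point.some _ _ h₂) = 2 ∧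
      addOrderOf (WeierstrassCurve.Affine.Point.some _ _ h₄) = 4 := by
  have h₂ := addOrderOf_some_zero_zero rfl W9_nonsingular_zero
  exact ⟨_, _, h₂, addOrderOf_eq_four_of_two_nsmul W9_two_nsmul_some_X h₂⟩
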